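/- Let d ≥ 1, 0 < β ≤ d + 2 and 0 < α < β. There exists a constant C = C(d,α,β) such that for every measurable f : ℝ^{d+1} → [0,∞] and every (t,x) ∈ ℝ^{d+1}, (−∂_t − Δ)^{−α/2} f(t,x) ≤ C (M_β f(t,x))^{α/β} (M f(t,x))^{1−α/β}, where both sides may be infinite. -/

import Mathlib

open MeasureTheory Metric Set ENNReal
open scoped Real ENNReal

noncomputable section

abbrev ESp (d : ℕ) := EuclideanSpace ℝ (Fin d)

/-- The parabolic cylinder `C_r(t,x)`. -/
def pCyl (d : ℕ) (r : ℝ) (z : ℝ × ESp d) : Set (ℝ × ESp d) :=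
  {w | z.1 ≤ w.1 ∧ w.1 ≤ z.1 + r ^ 2 ∧ dist w.2 z.2 ≤ r}

/-- The parabolic Morrey norm `‖·‖_{E_q}` of a nonnegative function on `ℝ^{d+1}`. -/
def morreyE (d : ℕ) (q : ℝ) (F : ℝ × ESp d → ℝ≥0∞) : ℝ≥0∞ :=
  ⨆ (r : ℝ) (_ : 0 < r) (z : ℝ × ESp d),
    ENNReal.ofReal r * ((volume (pCyl d r z))⁻¹ * ∫⁻ w in pCyl d r z, F w ^ q) ^ (1 / q)


/-- The parabolic fractional maximal function `M_β f`; `M f = M_0 f` is the parabolic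
maximal function. -/
def pMax (d : ℕ) (β : ℝ) (f : ℝ × ESp d → ℝ≥0∞) (z : ℝ × ESp d) : ℝ≥0∞ :=
  ⨆ (ρ : ℝ) (_ : 0 < ρ),
    ENNReal.ofReal (ρ ^ β) * ((volume (pCyl d ρ z))⁻¹ * ∫⁻ w in pCyl d ρ z, f w)

/-- The parabolic Riesz-type potential `(−∂_t − Δ)^{−α/2} f` of a nonnegative `f`. -/
def rieszP (d : ℕ) (α : ℝ) (f : ℝ × ESp d → ℝ≥0∞) (z : ℝ × ESp d) : ℝ≥0∞ :=
  ∫⁻ w in {w : ℝ × ESp d | z.1 < w.1},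
    ENNReal.ofReal ((4 * Real.pi * (w.1 - z.1)) ^ (-(d : ℝ) / 2) *
        (w.1 - z.1) ^ (-(2 - α) / 2) *
        Real.exp (-‖z.2 - w.2‖ ^ 2 / (4 * (w.1 - z.1)))) * f w

lemma pCyl_eq (d : ℕ) (r : ℝ) (z : ℝ × ESp d) :
    pCyl d r z = Icc z.1 (z.1 + r ^ 2) ×ˢ closedBall z.2 r := by
  ext w; simp [pCyl, and_assoc, mem_prod]


lemma measurableSet_pCyl (d : ℕ) (r : ℝ) (z : ℝ × ESp d) : MeasurableSet (pCyl d r z) := by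
  rw [pCyl_eq]; exact measurableSet_Icc.prod measurableSet_closedBall


lemma pCyl_mono (d : ℕ) {r r' : ℝ} (z : ℝ × ESp d) (h0 : 0 ≤ r) (h : r ≤ r') :
    pCyl d r z ⊆ pCyl d r' z := by
  intro w hw
  obtain ⟨h1, h2, h3⟩ := hw
  exact ⟨h1, h2.trans (by nlinarith), h3.trans h⟩


lemma volume_pCyl (d : ℕ) {r : ℝ} (hr : 0 ≤ r) (z : ℝ × ESp d) :
    volume (pCyl d r z)
      = ENNReal.ofReal (r ^ 2) * (ENNReal.ofReal (r ^ d) * volume (ball (0 : ESp d) 1)) := by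
  rw [pCyl_eq, Measure.volume_eq_prod, Measure.prod_prod, Real.volume_Icc,
    Measure.addHaar_closedBall _ _ hr, add_sub_cancel_left, finrank_euclideanSpace_fin]


lemma volume_pCyl_pos (d : ℕ) {ρ : ℝ} (hρ : 0 < ρ) (z : ℝ × ESp d) :
    0 < volume (pCyl d ρ z) := by
  rw [volume_pCyl d hρ.le z]
  exact ENNReal.mul_pos (by positivity)
    (ENNReal.mul_pos (by positivity) (measure_ball_pos _ _ one_pos).ne').ne'


lemma volume_pCyl_lt_top (d : ℕ) {ρ : ℝ} (hρ : 0 ≤ ρ) (z : ℝ × ESp d) :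
    volume (pCyl d ρ z) < ⊤ := by
  rw [volume_pCyl d hρ z]
  exact ENNReal.mul_lt_top ENNReal.ofReal_lt_top
    (ENNReal.mul_lt_top ENNReal.ofReal_lt_top measure_ball_lt_top)


lemma cyl_integral_le (d : ℕ) (β : ℝ) (f : ℝ × ESp d → ℝ≥0∞) (z : ℝ × ESp d)
    {ρ : ℝ} (hρ : 0 < ρ) :
    ∫⁻ w in pCyl d ρ z, f w ≤
      ENNReal.ofReal (ρ ^ ((d : ℝ) + 2 - β)) * volume (ball (0 : ESp d) 1) *
        pMax d β f z := by
  set V := volume (pCyl d ρ z) with hV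
  set I := ∫⁻ w in pCyl d ρ z, f w with hI
  have hVpos : 0 < V := volume_pCyl_pos d hρ z
  have hVtop : V < ⊤ := volume_pCyl_lt_top d hρ.le z
  have hXpos : (0:ℝ) < ρ ^ β := Real.rpow_pos_of_pos hρ β
  set X := ENNReal.ofReal (ρ ^ β) with hX
  have hle : X * (V⁻¹ * I) ≤ pMax d β f z := by
    refine le_iSup_of_le ρ ?_
    exact le_iSup_of_le hρ le_rfl
  have hY : V⁻¹ * I ≤ X⁻¹ * pMax d β f z := by
    have := mul_le_mul_right hle X⁻¹
    rwa [← mul_assoc, ENNReal.inv_mul_cancel (by positivity) ENNReal.ofReal_ne_top,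
      one_mul] at this
  have hIeq : I = V * (V⁻¹ * I) := by
    rw [← mul_assoc, ENNReal.mul_inv_cancel hVpos.ne' hVtop.ne, one_mul]
  calc I = V * (V⁻¹ * I) := hIeq
    _ ≤ V * (X⁻¹ * pMax d β f z) := mul_le_mul_right hY V
    _ = (V * X⁻¹) * pMax d β f z := by ring
    _ = ENNReal.ofReal (ρ ^ ((d : ℝ) + 2 - β)) * volume (ball (0 : ESp d) 1) *
        pMax d β f z := by
      congr 1
      rw [hV, volume_pCyl d hρ.le z, hX,
        ← ENNReal.ofReal_inv_of_pos hXpos]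
      rw [show (ρ : ℝ) ^ ((d : ℝ) + 2 - β) = ρ ^ 2 * ρ ^ d * (ρ ^ β)⁻¹ by
        rw [← Real.rpow_natCast ρ d, ← Real.rpow_natCast ρ 2, ← Real.rpow_neg hρ.le,
          ← Real.rpow_add hρ, ← Real.rpow_add hρ]
        ring_nf]
      rw [ENNReal.ofReal_mul (by positivity), ENNReal.ofReal_mul (by positivity)]
      ring


lemma exp_neg_le (k : ℕ) (hk : 0 < k) {x : ℝ} (hx : 0 < x) :
    Real.exp (-x) ≤ (k / x) ^ k := by
  have h1 : (x / k) ^ k ≤ Real.exp x := by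
    calc (x / k) ^ k ≤ (1 + x / k) ^ k := by
          apply pow_le_pow_left₀ (by positivity)
          linarith
      _ ≤ (Real.exp (x / k)) ^ k := by
          apply pow_le_pow_left₀ (by positivity)
          linarith [Real.add_one_le_exp (x / k)]
      _ = Real.exp x := by
          rw [← Real.exp_nat_mul]
          congr 1
          field_simp
  have h2 : ((k:ℝ) / x) ^ k = ((x / k) ^ k)⁻¹ := by
    rw [← inv_pow, inv_div]
  rw [Real.exp_neg, h2]
  exact inv_anti₀ (by positivity) h1


lemma kernel_bound (d : ℕ) (α : ℝ) (hα1 : 0 < α) (hαd : α < (d:ℝ) + 2) :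
    ∃ CK : ℝ, 0 < CK ∧ ∀ (ρ s' r : ℝ), 0 < ρ → 0 < s' → 0 ≤ r →
    (ρ ^ 2 < s' ∨ (ρ < r ∧ s' ≤ ρ ^ 2)) →
    (4 * Real.pi * s') ^ (-(d : ℝ) / 2) * s' ^ (-(2 - α) / 2) * Real.exp (-r ^ 2 / (4 * s'))
      ≤ CK * ρ ^ (α - (d:ℝ) - 2) := by
  have hπ : (0:ℝ) < 4 * Real.pi := by positivity
  set P : ℝ := (4 * Real.pi) ^ (-(d : ℝ) / 2) with hP
  have hPpos : 0 < P := Real.rpow_pos_of_pos hπ _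
  set c2 : ℝ := (4 * ((d:ℝ) + 1)) ^ (d + 1) with hc2
  have hc2pos : 0 < c2 := by positivity
  refine ⟨P * (1 + c2), by positivity, ?_⟩
  intro ρ s' r hρ hs' hr hcase
  have hρe : 0 < ρ ^ (α - (d:ℝ) - 2) := Real.rpow_pos_of_pos hρ _
  have hsplit : (4 * Real.pi * s') ^ (-(d : ℝ) / 2) * s' ^ (-(2 - α) / 2)
      = P * s' ^ ((α - (d:ℝ) - 2) / 2) := by
    rw [Real.mul_rpow hπ.le hs'.le, mul_assoc, ← Real.rpow_add hs']
    congr 2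
    ring
  rw [hsplit]
  have key : s' ^ ((α - (d:ℝ) - 2) / 2) * Real.exp (-r ^ 2 / (4 * s'))
      ≤ (1 + c2) * ρ ^ (α - (d:ℝ) - 2) := by
    have hρ2 : (ρ:ℝ) ^ 2 = ρ ^ ((2:ℕ):ℝ) := (Real.rpow_natCast ρ 2).symm
    rcases hcase with h1 | ⟨h2r, h2s⟩
    · -- far in time: exp ≤ 1, s' ^ neg ≤ (ρ²)^neg
      have he : Real.exp (-r ^ 2 / (4 * s')) ≤ 1 := by
        apply Real.exp_le_one_iff.mpr
        rw [neg_div]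
        have : (0:ℝ) ≤ r ^ 2 / (4 * s') := by positivity
        linarith
      have hb : s' ^ ((α - (d:ℝ) - 2) / 2) ≤ ρ ^ (α - (d:ℝ) - 2) := by
        have : s' ^ ((α - (d:ℝ) - 2) / 2) ≤ (ρ ^ 2) ^ ((α - (d:ℝ) - 2) / 2) :=
          Real.rpow_le_rpow_of_nonpos (by positivity) h1.le (by linarith)
        calc s' ^ ((α - (d:ℝ) - 2) / 2) ≤ (ρ ^ 2) ^ ((α - (d:ℝ) - 2) / 2) := this
          _ = ρ ^ (α - (d:ℝ) - 2) := by
            rw [hρ2, ← Real.rpow_mul hρ.le]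
            norm_num
            congr 1
            ring
      calc s' ^ ((α - (d:ℝ) - 2) / 2) * Real.exp (-r ^ 2 / (4 * s'))
          ≤ ρ ^ (α - (d:ℝ) - 2) * 1 := by
            apply mul_le_mul hb he (Real.exp_pos _).le hρe.le
        _ ≤ (1 + c2) * ρ ^ (α - (d:ℝ) - 2) := by nlinarith
    · -- far in space
      set k : ℕ := d + 1 with hk
      have hx : (0:ℝ) < ρ ^ 2 / (4 * s') := by positivity
      have he1 : Real.exp (-r ^ 2 / (4 * s')) ≤ Real.exp (-ρ ^ 2 / (4 * s')) := by
        apply Real.exp_le_exp.mpr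
        apply div_le_div_of_nonneg_right ?_ (by positivity)
        nlinarith
      have he2 : Real.exp (-ρ ^ 2 / (4 * s')) ≤ ((k:ℝ) / (ρ ^ 2 / (4 * s'))) ^ k := by
        rw [neg_div]
        exact exp_neg_le k (by omega) hx
      have he3 : ((k:ℝ) / (ρ ^ 2 / (4 * s'))) ^ k = (4 * (k:ℝ)) ^ k * s' ^ k / (ρ ^ 2) ^ k := by
        rw [div_div_eq_mul_div, div_pow, mul_pow, mul_pow]
        ring
      -- s'^{(α-d-2)/2} * s'^k ≤ (ρ²)^{(α-d-2)/2 + k}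
      have hs'k : s' ^ ((α - (d:ℝ) - 2) / 2) * s' ^ k = s' ^ ((α - (d:ℝ) - 2) / 2 + k) := by
        rw [← Real.rpow_natCast s' k, ← Real.rpow_add hs']
      have hexp_nonneg : (0:ℝ) ≤ (α - (d:ℝ) - 2) / 2 + k := by
        have : ((k:ℕ):ℝ) = (d:ℝ) + 1 := by push_cast [hk]; ring
        rw [this]; linarith
      have hmono : s' ^ ((α - (d:ℝ) - 2) / 2 + k) ≤ (ρ ^ 2) ^ ((α - (d:ℝ) - 2) / 2 + k) :=
        Real.rpow_le_rpow hs'.le h2s hexp_nonneg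
      have hfinal : (ρ ^ 2) ^ ((α - (d:ℝ) - 2) / 2 + k) / (ρ ^ 2) ^ k
          = ρ ^ (α - (d:ℝ) - 2) := by
        rw [← Real.rpow_natCast (ρ^2) k, ← Real.rpow_sub (by positivity), hρ2,
          ← Real.rpow_mul hρ.le]
        norm_num
        congr 1
        ring
      have hval : s' ^ ((α - (d:ℝ) - 2) / 2) * Real.exp (-r ^ 2 / (4 * s'))
          ≤ (4 * (k:ℝ)) ^ k * ρ ^ (α - (d:ℝ) - 2) := by
        calc s' ^ ((α - (d:ℝ) - 2) / 2) * Real.exp (-r ^ 2 / (4 * s'))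
            ≤ s' ^ ((α - (d:ℝ) - 2) / 2) * ((4 * (k:ℝ)) ^ k * s' ^ k / (ρ ^ 2) ^ k) := by
              apply mul_le_mul_of_nonneg_left _ (Real.rpow_pos_of_pos hs' _).le
              rw [← he3]; exact he1.trans he2
          _ = (4 * (k:ℝ)) ^ k * (s' ^ ((α - (d:ℝ) - 2) / 2) * s' ^ k) / (ρ ^ 2) ^ k := by
              ring
          _ ≤ (4 * (k:ℝ)) ^ k * (ρ ^ 2) ^ ((α - (d:ℝ) - 2) / 2 + k) / (ρ ^ 2) ^ k := by
              apply div_le_div_of_nonneg_right ?_ (by positivity)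
              rw [hs'k]
              apply mul_le_mul_of_nonneg_left hmono (by positivity)
          _ = (4 * (k:ℝ)) ^ k * ρ ^ (α - (d:ℝ) - 2) := by
              rw [mul_div_assoc, hfinal]
      have hc2k : (4 * (k:ℝ)) ^ k = c2 := by
        rw [hc2, hk]; push_cast; ring
      calc s' ^ ((α - (d:ℝ) - 2) / 2) * Real.exp (-r ^ 2 / (4 * s'))
          ≤ (4 * (k:ℝ)) ^ k * ρ ^ (α - (d:ℝ) - 2) := hval
        _ ≤ (1 + c2) * ρ ^ (α - (d:ℝ) - 2) := by
            rw [hc2k] at *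
            nlinarith
  calc P * s' ^ ((α - (d:ℝ) - 2) / 2) * Real.exp (-r ^ 2 / (4 * s'))
      = P * (s' ^ ((α - (d:ℝ) - 2) / 2) * Real.exp (-r ^ 2 / (4 * s'))) := by ring
    _ ≤ P * ((1 + c2) * ρ ^ (α - (d:ℝ) - 2)) := by
        apply mul_le_mul_of_nonneg_left key hPpos.le
    _ = P * (1 + c2) * ρ ^ (α - (d:ℝ) - 2) := by ring


lemma not_mem_pCyl_cases (d : ℕ) {ρ : ℝ} {z w : ℝ × ESp d} (h1 : z.1 < w.1)
    (h2 : w ∉ pCyl d ρ z) :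
    ρ ^ 2 < w.1 - z.1 ∨ (ρ < ‖z.2 - w.2‖ ∧ w.1 - z.1 ≤ ρ ^ 2) := by
  simp only [pCyl, mem_setOf_eq, not_and, not_le] at h2
  by_cases hc : ρ ^ 2 < w.1 - z.1
  · exact Or.inl hc
  · push_neg at hc
    right
    refine ⟨?_, hc⟩
    have := h2 h1.le (by linarith)
    rwa [dist_eq_norm, ← norm_sub_rev] at this


lemma shell_bound (d : ℕ) (α CK : ℝ)
    (hker : ∀ (ρ s' r : ℝ), 0 < ρ → 0 < s' → 0 ≤ r →
      (ρ ^ 2 < s' ∨ (ρ < r ∧ s' ≤ ρ ^ 2)) →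
      (4 * Real.pi * s') ^ (-(d : ℝ) / 2) * s' ^ (-(2 - α) / 2) * Real.exp (-r ^ 2 / (4 * s'))
        ≤ CK * ρ ^ (α - (d:ℝ) - 2))
    (f : ℝ × ESp d → ℝ≥0∞) (hf : Measurable f) (z : ℝ × ESp d) {ρ : ℝ} (hρ : 0 < ρ) :
    ∫⁻ w in (pCyl d (2 * ρ) z \ pCyl d ρ z) ∩ {w | z.1 < w.1},
        ENNReal.ofReal ((4 * Real.pi * (w.1 - z.1)) ^ (-(d : ℝ) / 2) *
          (w.1 - z.1) ^ (-(2 - α) / 2) *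
          Real.exp (-‖z.2 - w.2‖ ^ 2 / (4 * (w.1 - z.1)))) * f w
      ≤ ENNReal.ofReal (CK * ρ ^ (α - (d:ℝ) - 2)) * ∫⁻ w in pCyl d (2 * ρ) z, f w := by
  calc ∫⁻ w in (pCyl d (2 * ρ) z \ pCyl d ρ z) ∩ {w | z.1 < w.1},
        ENNReal.ofReal ((4 * Real.pi * (w.1 - z.1)) ^ (-(d : ℝ) / 2) *
          (w.1 - z.1) ^ (-(2 - α) / 2) *
          Real.exp (-‖z.2 - w.2‖ ^ 2 / (4 * (w.1 - z.1)))) * f w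
      ≤ ∫⁻ w in (pCyl d (2 * ρ) z \ pCyl d ρ z) ∩ {w | z.1 < w.1},
          ENNReal.ofReal (CK * ρ ^ (α - (d:ℝ) - 2)) * f w := by
        apply setLIntegral_mono (measurable_const.mul hf)
        intro w hw
        apply mul_le_mul_left
        apply ENNReal.ofReal_le_ofReal
        have h1 : z.1 < w.1 := hw.2
        exact hker ρ (w.1 - z.1) ‖z.2 - w.2‖ hρ (by linarith) (norm_nonneg _)
          (not_mem_pCyl_cases d h1 hw.1.2)
    _ = ENNReal.ofReal (CK * ρ ^ (α - (d:ℝ) - 2)) *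
        ∫⁻ w in (pCyl d (2 * ρ) z \ pCyl d ρ z) ∩ {w | z.1 < w.1}, f w :=
        lintegral_const_mul _ hf
    _ ≤ ENNReal.ofReal (CK * ρ ^ (α - (d:ℝ) - 2)) * ∫⁻ w in pCyl d (2 * ρ) z, f w := by
        apply mul_le_mul_right
        apply lintegral_mono_set
        intro w hw
        exact hw.1.1


lemma mul_pow_rpow {T p : ℝ} (hT : 0 < T) (hp : 0 < p) (m : ℕ) (γ : ℝ) :
    (T * p ^ m) ^ γ = T ^ γ * (p ^ γ) ^ m := by
  rw [Real.mul_rpow hT.le (by positivity), ← Real.rpow_natCast p m,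
    ← Real.rpow_mul hp.le, mul_comm (m:ℝ) γ, Real.rpow_mul hp.le,
    Real.rpow_natCast]


lemma coverage (d : ℕ) {T : ℝ} (hT : 0 < T) (z : ℝ × ESp d) :
    {w : ℝ × ESp d | z.1 < w.1} ⊆
      (⋃ n : ℕ, (pCyl d (2 * (T / 2 ^ (n+1))) z \ pCyl d (T / 2 ^ (n+1)) z)) ∪
      (⋃ n : ℕ, (pCyl d (2 * (T * 2 ^ n)) z \ pCyl d (T * 2 ^ n) z)) := by
  intro w hw
  have hs' : 0 < w.1 - z.1 := by simpa [sub_pos] using hw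
  classical
  by_cases hmem : w ∈ pCyl d T z
  · -- near case
    left
    have hexist : ∃ n : ℕ, w ∉ pCyl d (T / 2 ^ n) z := by
      obtain ⟨n, hn⟩ := exists_pow_lt_of_lt_one (show 0 < (w.1 - z.1) / T ^ 2 by positivity)
        (show (1:ℝ)/4 < 1 by norm_num)
      refine ⟨2 * n, fun hmem' => ?_⟩
      have h2 : w.1 ≤ z.1 + (T / 2 ^ (2*n)) ^ 2 := hmem'.2.1
      set c : ℝ := 2 ^ (2*n) with hc
      have hcpos : (0:ℝ) < c := by positivity
      have hc1 : (1:ℝ) ≤ c := one_le_pow₀ (by norm_num)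
      have h4 : ((1:ℝ)/4) ^ n = 1 / c := by
        rw [hc, pow_mul, ← one_div_pow]
        norm_num
      rw [h4, div_lt_div_iff₀ hcpos (by positivity)] at hn
      have key : (T / c) ^ 2 < w.1 - z.1 := by
        rw [div_pow, div_lt_iff₀ (by positivity)]
        nlinarith
      linarith
    set N := Nat.find hexist with hN
    have hspec : w ∉ pCyl d (T / 2 ^ N) z := Nat.find_spec hexist
    have hNpos : 0 < N := by
      rcases Nat.eq_zero_or_pos N with h0 | h
      · exfalso; apply h0 ▸ hspec; simpa using hmem
      · exact h
    have hprev : w ∈ pCyl d (T / 2 ^ (N - 1)) z :=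
      not_not.mp (Nat.find_min hexist (show N - 1 < N by omega))
    refine mem_iUnion.mpr ⟨N - 1, ?_, ?_⟩
    · have hrad : 2 * (T / 2 ^ (N - 1 + 1)) = T / 2 ^ (N - 1) := by
        rw [pow_succ]
        field_simp
      rw [hrad]; exact hprev
    · have : N - 1 + 1 = N := by omega
      rw [this]; exact hspec
  · -- far case
    right
    have hexist : ∃ n : ℕ, w ∈ pCyl d (T * 2 ^ n) z := by
      obtain ⟨n, hn⟩ := pow_unbounded_of_one_lt
        (max (dist w.2 z.2 / T) ((w.1 - z.1) / T ^ 2)) (one_lt_two (α := ℝ))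
      have hn1 : dist w.2 z.2 / T < 2 ^ n := lt_of_le_of_lt (le_max_left _ _) hn
      have hn2 : (w.1 - z.1) / T ^ 2 < 2 ^ n := lt_of_le_of_lt (le_max_right _ _) hn
      have h2n : (1:ℝ) ≤ 2 ^ n := one_le_pow₀ (by norm_num)
      refine ⟨n, hw.le, ?_, ?_⟩
      · have : w.1 - z.1 < T ^ 2 * 2 ^ n := by
          rw [div_lt_iff₀ (by positivity)] at hn2
          linarith [hn2]
        nlinarith
      · have : dist w.2 z.2 < T * 2 ^ n := by
          rw [div_lt_iff₀ hT] at hn1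
          linarith [hn1]
        linarith
    set N := Nat.find hexist with hN
    have hspec : w ∈ pCyl d (T * 2 ^ N) z := Nat.find_spec hexist
    have hNpos : 0 < N := by
      rcases Nat.eq_zero_or_pos N with h0 | h
      · exfalso; apply hmem; have := h0 ▸ hspec; simpa using this
      · exact h
    have hprev : w ∉ pCyl d (T * 2 ^ (N - 1)) z :=
      Nat.find_min hexist (show N - 1 < N by omega)
    refine mem_iUnion.mpr ⟨N - 1, ?_, hprev⟩
    have hrad : 2 * (T * 2 ^ (N - 1)) = T * 2 ^ N := by
      rw [show 2 * (T * 2 ^ (N - 1)) = T * (2 ^ (N - 1) * 2) by ring, ← pow_succ,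
        show N - 1 + 1 = N by omega]
    rw [hrad]; exact hspec


lemma master (d : ℕ) (α β : ℝ) (hβ1 : 0 < β) (hβ2 : β ≤ (d:ℝ) + 2) (hα1 : 0 < α)
    (hαβ : α < β) :
    ∃ C : ℝ, 0 < C ∧ ∀ f : ℝ × ESp d → ℝ≥0∞, Measurable f → ∀ z : ℝ × ESp d,
      ∀ T : ℝ, 0 < T →
      rieszP d α f z ≤ ENNReal.ofReal C *
        (ENNReal.ofReal (T ^ α) * pMax d 0 f z +
          ENNReal.ofReal (T ^ (α - β)) * pMax d β f z) := by
  obtain ⟨CK, hCK, hker⟩ := kernel_bound d α hα1 (by linarith)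
  set κ := volume (ball (0:ESp d) 1) with hκ
  have hκpos : 0 < κ := measure_ball_pos _ _ one_pos
  have hκtop : κ < ⊤ := measure_ball_lt_top
  set κT := κ.toReal with hκT
  have hκTpos : 0 < κT := ENNReal.toReal_pos hκpos.ne' hκtop.ne
  have hκeq : κ = ENNReal.ofReal κT := (ENNReal.ofReal_toReal hκtop.ne).symm
  set γ : ℝ := α - (d:ℝ) - 2 with hγ
  set X : ℝ := (1/2:ℝ) ^ γ with hX
  set Y : ℝ := (1/2:ℝ) ^ ((d:ℝ) + 2 - 0) with hY
  set X2 : ℝ := (2:ℝ) ^ γ with hX2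
  set Y2 : ℝ := (2:ℝ) ^ ((d:ℝ) + 2 - β) with hY2
  have hXpos : 0 < X := Real.rpow_pos_of_pos one_half_pos _
  have hYpos : 0 < Y := Real.rpow_pos_of_pos one_half_pos _
  have hX2pos : 0 < X2 := Real.rpow_pos_of_pos two_pos _
  have hY2pos : 0 < Y2 := Real.rpow_pos_of_pos two_pos _
  set r1 : ℝ := (1/2:ℝ) ^ α with hr1
  set r2 : ℝ := (2:ℝ) ^ (α - β) with hr2
  have hr1pos : 0 < r1 := Real.rpow_pos_of_pos one_half_pos _
  have hr2pos : 0 < r2 := Real.rpow_pos_of_pos two_pos _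
  have hr1lt : r1 < 1 := Real.rpow_lt_one (by norm_num) (by norm_num) hα1
  have hr2lt : r2 < 1 := Real.rpow_lt_one_of_one_lt_of_neg (by norm_num) (by linarith)
  have hXY : X * Y = r1 := by
    rw [hX, hY, hr1, ← Real.rpow_add one_half_pos]
    congr 1
    ring
  have hXY2 : X2 * Y2 = r2 := by
    rw [hX2, hY2, hr2, ← Real.rpow_add two_pos]
    congr 1
    ring
  set CN : ℝ := CK * X with hCN
  set CF : ℝ := CK * Y2 with hCF
  set G1 : ℝ := (1 - r1)⁻¹ with hG1
  set G2 : ℝ := (1 - r2)⁻¹ with hG2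
  have hG1pos : 0 < G1 := by rw [hG1]; exact inv_pos.mpr (by linarith)
  have hG2pos : 0 < G2 := by rw [hG2]; exact inv_pos.mpr (by linarith)
  refine ⟨(CN * G1 + CF * G2) * κT, by positivity, ?_⟩
  intro f hf z T hT
  set S := {w : ℝ × ESp d | z.1 < w.1} with hS
  set g : ℝ × ESp d → ℝ≥0∞ := fun w =>
    ENNReal.ofReal ((4 * Real.pi * (w.1 - z.1)) ^ (-(d : ℝ) / 2) *
        (w.1 - z.1) ^ (-(2 - α) / 2) *
        Real.exp (-‖z.2 - w.2‖ ^ 2 / (4 * (w.1 - z.1)))) * f w with hg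
  set a := pMax d β f z with ha
  set b := pMax d 0 f z with hb
  set NS : ℕ → Set (ℝ × ESp d) := fun n =>
    (pCyl d (2 * (T / 2 ^ (n+1))) z \ pCyl d (T / 2 ^ (n+1)) z) ∩ S with hNS
  set FS : ℕ → Set (ℝ × ESp d) := fun n =>
    (pCyl d (2 * (T * 2 ^ n)) z \ pCyl d (T * 2 ^ n) z) ∩ S with hFS
  have hsub : S ⊆ (⋃ n, NS n) ∪ (⋃ n, FS n) := by
    intro w hw
    rcases coverage d hT z hw with h | h
    · obtain ⟨n, hn⟩ := mem_iUnion.mp h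
      exact mem_union_left _ (mem_iUnion.mpr ⟨n, hn, hw⟩)
    · obtain ⟨n, hn⟩ := mem_iUnion.mp h
      exact mem_union_right _ (mem_iUnion.mpr ⟨n, hn, hw⟩)
  have hρN : ∀ n : ℕ, (0:ℝ) < T / 2 ^ (n+1) := fun n => by positivity
  have hρF : ∀ n : ℕ, (0:ℝ) < T * 2 ^ n := fun n => by positivity
  -- near shell bound
  have hnear : ∀ n : ℕ, ∫⁻ w in NS n, g w ≤
      ENNReal.ofReal (CN * T ^ α) * (ENNReal.ofReal r1) ^ n * (κ * b) := by
    intro n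
    have hb1 : ∫⁻ w in NS n, g w ≤
        ENNReal.ofReal (CK * (T / 2 ^ (n+1)) ^ γ) * ∫⁻ w in pCyl d (2 * (T / 2 ^ (n+1))) z, f w :=
      shell_bound d α CK hker f hf z (hρN n)
    have hb2 : ∫⁻ w in pCyl d (2 * (T / 2 ^ (n+1))) z, f w ≤
        ENNReal.ofReal ((2 * (T / 2 ^ (n+1))) ^ ((d:ℝ) + 2 - 0)) * κ * b :=
      cyl_integral_le d 0 f z (by positivity)
    have hkey : CK * (T / 2 ^ (n+1)) ^ γ * (2 * (T / 2 ^ (n+1))) ^ ((d:ℝ) + 2 - 0)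
        = CN * T ^ α * r1 ^ n := by
      have hu1 : T / 2 ^ (n+1) = T * (1/2:ℝ) ^ (n+1) := by
        rw [one_div, inv_pow, div_eq_mul_inv]
      have hu2 : 2 * (T / 2 ^ (n+1)) = T * (1/2:ℝ) ^ n := by
        rw [hu1, pow_succ]; ring
      have hTT : T ^ γ * T ^ ((d:ℝ) + 2 - 0) = T ^ α := by
        rw [← Real.rpow_add hT]; congr 1; ring
      rw [hu2, hu1, mul_pow_rpow hT one_half_pos, mul_pow_rpow hT one_half_pos,
        ← hX, ← hY, hCN, ← hTT, ← hXY, pow_succ, mul_pow]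
      ring
    calc ∫⁻ w in NS n, g w
        ≤ ENNReal.ofReal (CK * (T / 2 ^ (n+1)) ^ γ) *
            (ENNReal.ofReal ((2 * (T / 2 ^ (n+1))) ^ ((d:ℝ) + 2 - 0)) * κ * b) :=
          hb1.trans (mul_le_mul_right hb2 _)
      _ = ENNReal.ofReal (CK * (T / 2 ^ (n+1)) ^ γ * (2 * (T / 2 ^ (n+1))) ^ ((d:ℝ) + 2 - 0)) *
            (κ * b) := by
          rw [show ENNReal.ofReal (CK * (T / 2 ^ (n+1)) ^ γ *
              (2 * (T / 2 ^ (n+1))) ^ ((d:ℝ) + 2 - 0)) =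
              ENNReal.ofReal (CK * (T / 2 ^ (n+1)) ^ γ) *
              ENNReal.ofReal ((2 * (T / 2 ^ (n+1))) ^ ((d:ℝ) + 2 - 0)) from
            ENNReal.ofReal_mul (by positivity)]
          simp only [mul_assoc]
      _ = ENNReal.ofReal (CN * T ^ α * r1 ^ n) * (κ * b) := by rw [hkey]
      _ = ENNReal.ofReal (CN * T ^ α) * (ENNReal.ofReal r1) ^ n * (κ * b) := by
          rw [ENNReal.ofReal_mul (by positivity), ENNReal.ofReal_pow hr1pos.le]
  -- far shell bound
  have hfar : ∀ n : ℕ, ∫⁻ w in FS n, g w ≤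
      ENNReal.ofReal (CF * T ^ (α - β)) * (ENNReal.ofReal r2) ^ n * (κ * a) := by
    intro n
    have hb1 : ∫⁻ w in FS n, g w ≤
        ENNReal.ofReal (CK * (T * 2 ^ n) ^ γ) * ∫⁻ w in pCyl d (2 * (T * 2 ^ n)) z, f w :=
      shell_bound d α CK hker f hf z (hρF n)
    have hb2 : ∫⁻ w in pCyl d (2 * (T * 2 ^ n)) z, f w ≤
        ENNReal.ofReal ((2 * (T * 2 ^ n)) ^ ((d:ℝ) + 2 - β)) * κ * a :=
      cyl_integral_le d β f z (by positivity)
    have hkey : CK * (T * 2 ^ n) ^ γ * (2 * (T * 2 ^ n)) ^ ((d:ℝ) + 2 - β)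
        = CF * T ^ (α - β) * r2 ^ n := by
      have hv2 : 2 * (T * 2 ^ n) = T * (2:ℝ) ^ (n+1) := by rw [pow_succ]; ring
      have hTT : T ^ γ * T ^ ((d:ℝ) + 2 - β) = T ^ (α - β) := by
        rw [← Real.rpow_add hT]; congr 1; ring
      rw [hv2, mul_pow_rpow hT two_pos, mul_pow_rpow hT two_pos,
        ← hX2, ← hY2, hCF, ← hTT, ← hXY2, pow_succ, mul_pow]
      ring
    calc ∫⁻ w in FS n, g w
        ≤ ENNReal.ofReal (CK * (T * 2 ^ n) ^ γ) *
            (ENNReal.ofReal ((2 * (T * 2 ^ n)) ^ ((d:ℝ) + 2 - β)) * κ * a) :=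
          hb1.trans (mul_le_mul_right hb2 _)
      _ = ENNReal.ofReal (CK * (T * 2 ^ n) ^ γ * (2 * (T * 2 ^ n)) ^ ((d:ℝ) + 2 - β)) *
            (κ * a) := by
          rw [show ENNReal.ofReal (CK * (T * 2 ^ n) ^ γ *
              (2 * (T * 2 ^ n)) ^ ((d:ℝ) + 2 - β)) =
              ENNReal.ofReal (CK * (T * 2 ^ n) ^ γ) *
              ENNReal.ofReal ((2 * (T * 2 ^ n)) ^ ((d:ℝ) + 2 - β)) from
            ENNReal.ofReal_mul (by positivity)]
          simp only [mul_assoc]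
      _ = ENNReal.ofReal (CF * T ^ (α - β) * r2 ^ n) * (κ * a) := by rw [hkey]
      _ = ENNReal.ofReal (CF * T ^ (α - β)) * (ENNReal.ofReal r2) ^ n * (κ * a) := by
          rw [ENNReal.ofReal_mul (by positivity), ENNReal.ofReal_pow hr2pos.le]
  -- geometric sums
  have hgeom : ∀ (r G : ℝ), 0 < r → r < 1 → G = (1 - r)⁻¹ →
      ∑' n : ℕ, (ENNReal.ofReal r) ^ n = ENNReal.ofReal G := by
    intro r G hr hrlt hGdef
    rw [ENNReal.tsum_geometric, hGdef,
      ENNReal.ofReal_inv_of_pos (by linarith), ENNReal.ofReal_sub 1 hr.le,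
      ENNReal.ofReal_one]
  have hsum1 : ∑' n : ℕ, ∫⁻ w in NS n, g w ≤
      ENNReal.ofReal (CN * T ^ α) * ENNReal.ofReal G1 * (κ * b) := by
    calc ∑' n : ℕ, ∫⁻ w in NS n, g w
        ≤ ∑' n : ℕ, ENNReal.ofReal (CN * T ^ α) * (ENNReal.ofReal r1) ^ n * (κ * b) :=
          ENNReal.tsum_le_tsum hnear
      _ = ENNReal.ofReal (CN * T ^ α) * (∑' n : ℕ, (ENNReal.ofReal r1) ^ n) * (κ * b) := by
          rw [ENNReal.tsum_mul_right, ENNReal.tsum_mul_left]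
      _ = ENNReal.ofReal (CN * T ^ α) * ENNReal.ofReal G1 * (κ * b) := by
          rw [hgeom r1 G1 hr1pos hr1lt hG1]
  have hsum2 : ∑' n : ℕ, ∫⁻ w in FS n, g w ≤
      ENNReal.ofReal (CF * T ^ (α - β)) * ENNReal.ofReal G2 * (κ * a) := by
    calc ∑' n : ℕ, ∫⁻ w in FS n, g w
        ≤ ∑' n : ℕ, ENNReal.ofReal (CF * T ^ (α - β)) * (ENNReal.ofReal r2) ^ n * (κ * a) :=
          ENNReal.tsum_le_tsum hfar
      _ = ENNReal.ofReal (CF * T ^ (α - β)) * (∑' n : ℕ, (ENNReal.ofReal r2) ^ n) * (κ * a) := by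
          rw [ENNReal.tsum_mul_right, ENNReal.tsum_mul_left]
      _ = ENNReal.ofReal (CF * T ^ (α - β)) * ENNReal.ofReal G2 * (κ * a) := by
          rw [hgeom r2 G2 hr2pos hr2lt hG2]
  -- assemble
  have hmain : rieszP d α f z ≤
      ENNReal.ofReal (CN * T ^ α) * ENNReal.ofReal G1 * (κ * b) +
      ENNReal.ofReal (CF * T ^ (α - β)) * ENNReal.ofReal G2 * (κ * a) := by
    calc rieszP d α f z = ∫⁻ w in S, g w := rfl
      _ ≤ ∫⁻ w in (⋃ n, NS n) ∪ (⋃ n, FS n), g w := lintegral_mono_set hsub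
      _ ≤ (∫⁻ w in ⋃ n, NS n, g w) + ∫⁻ w in ⋃ n, FS n, g w := lintegral_union_le _ _ _
      _ ≤ (∑' n : ℕ, ∫⁻ w in NS n, g w) + ∑' n : ℕ, ∫⁻ w in FS n, g w :=
          add_le_add (lintegral_iUnion_le _ _) (lintegral_iUnion_le _ _)
      _ ≤ _ := add_le_add hsum1 hsum2
  refine hmain.trans ?_
  have hCNpos : 0 < CN := mul_pos hCK hXpos
  have hCFpos : 0 < CF := mul_pos hCK hY2pos
  have e1 : ENNReal.ofReal (CN * T ^ α) * ENNReal.ofReal G1 * (κ * b)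
      = ENNReal.ofReal (CN * G1 * κT) * (ENNReal.ofReal (T ^ α) * b) := by
    rw [hκeq, ENNReal.ofReal_mul hCNpos.le, ENNReal.ofReal_mul (mul_pos hCNpos hG1pos).le,
      ENNReal.ofReal_mul hCNpos.le]
    ring
  have e2 : ENNReal.ofReal (CF * T ^ (α - β)) * ENNReal.ofReal G2 * (κ * a)
      = ENNReal.ofReal (CF * G2 * κT) * (ENNReal.ofReal (T ^ (α - β)) * a) := by
    rw [hκeq, ENNReal.ofReal_mul hCFpos.le, ENNReal.ofReal_mul (mul_pos hCFpos hG2pos).le,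
      ENNReal.ofReal_mul hCFpos.le]
    ring
  rw [e1, e2, mul_add]
  exact add_le_add
    (mul_le_mul_left (ENNReal.ofReal_le_ofReal
      (by nlinarith [mul_pos (mul_pos hCFpos hG2pos) hκTpos])) _)
    (mul_le_mul_left (ENNReal.ofReal_le_ofReal
      (by nlinarith [mul_pos (mul_pos hCNpos hG1pos) hκTpos])) _)


lemma pMax_eq_zero_iff (d : ℕ) (β : ℝ) (f : ℝ × ESp d → ℝ≥0∞) (z : ℝ × ESp d) :
    pMax d β f z = 0 ↔ ∀ ρ : ℝ, 0 < ρ → ∫⁻ w in pCyl d ρ z, f w = 0 := by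
  constructor
  · intro h ρ hρ
    have hterm : ENNReal.ofReal (ρ ^ β) *
        ((volume (pCyl d ρ z))⁻¹ * ∫⁻ w in pCyl d ρ z, f w) ≤ pMax d β f z :=
      le_iSup_of_le ρ (le_iSup_of_le hρ le_rfl)
    rw [h, le_zero_iff] at hterm
    rcases mul_eq_zero.mp hterm with h1 | h2
    · exact absurd h1 (by
        rw [ENNReal.ofReal_eq_zero, not_le]
        exact Real.rpow_pos_of_pos hρ β)
    · rcases mul_eq_zero.mp h2 with h3 | h4
      · exact absurd h3 (ENNReal.inv_ne_zero.mpr (volume_pCyl_lt_top d hρ.le z).ne)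
      · exact h4
  · intro h
    rw [pMax]
    apply le_antisymm _ zero_le
    apply iSup₂_le
    intro ρ hρ
    rw [h ρ hρ, mul_zero, mul_zero]


/-- Krylov's pointwise bound: for `0 < α < β ≤ d + 2`,
`(−∂_t − Δ)^{−α/2} f ≤ C (M_β f)^{α/β} (M f)^{1−α/β}` pointwise. -/
theorem riesz_pointwise_maximal_bound (d : ℕ) (hd : 1 ≤ d) (α β : ℝ)
    (hβ1 : 0 < β) (hβ2 : β ≤ (d : ℝ) + 2) (hα1 : 0 < α) (hαβ : α < β) :
    ∃ C : ℝ, 0 < C ∧ ∀ f : ℝ × ESp d → ℝ≥0∞, Measurable f → ∀ z : ℝ × ESp d,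
      rieszP d α f z ≤
        ENNReal.ofReal C * (pMax d β f z) ^ (α / β) * (pMax d 0 f z) ^ (1 - α / β) := by
  obtain ⟨C0, hC0, hmaster⟩ := master d α β hβ1 hβ2 hα1 hαβ
  refine ⟨2 * C0, by positivity, ?_⟩
  intro f hf z
  set a := pMax d β f z with ha
  set b := pMax d 0 f z with hb
  have hC2 : (ENNReal.ofReal (2 * C0)) ≠ 0 := by
    rw [Ne, ENNReal.ofReal_eq_zero, not_le]; positivity
  have hediv1 : 0 < α / β := div_pos hα1 hβ1
  have hediv2 : 0 < 1 - α / β := by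
    have : α / β < 1 := (div_lt_one hβ1).mpr hαβ
    linarith
  have hab : (a = 0) ↔ (b = 0) := by
    rw [ha, hb, pMax_eq_zero_iff, pMax_eq_zero_iff]
  by_cases hb0 : b = 0
  · have ha0 : a = 0 := hab.mpr hb0
    calc rieszP d α f z
        ≤ ENNReal.ofReal C0 * (ENNReal.ofReal ((1:ℝ) ^ α) * b +
            ENNReal.ofReal ((1:ℝ) ^ (α - β)) * a) := hmaster f hf z 1 one_pos
      _ = 0 := by rw [hb0, ha0, mul_zero, mul_zero, add_zero, mul_zero]
      _ ≤ _ := zero_le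
  · have ha0 : a ≠ 0 := fun h => hb0 (hab.mp h)
    by_cases hbtop : b = ⊤
    · have : ENNReal.ofReal (2 * C0) * a ^ (α / β) * b ^ (1 - α / β) = ⊤ := by
        rw [hbtop, ENNReal.top_rpow_of_pos hediv2, ENNReal.mul_top]
        rw [Ne, mul_eq_zero]
        push_neg
        refine ⟨hC2, ?_⟩
        rw [Ne, ENNReal.rpow_eq_zero_iff]
        push_neg
        exact ⟨fun h => absurd h ha0, fun _ => hediv1.le⟩
      rw [this]
      exact le_top
    · by_cases hatop : a = ⊤
      · have : ENNReal.ofReal (2 * C0) * a ^ (α / β) * b ^ (1 - α / β) = ⊤ := by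
          rw [hatop, ENNReal.top_rpow_of_pos hediv1, ENNReal.mul_top hC2,
            ENNReal.top_mul]
          rw [Ne, ENNReal.rpow_eq_zero_iff]
          push_neg
          exact ⟨fun h => absurd h hb0, fun h => absurd h hbtop⟩
        rw [this]
        exact le_top
      · -- main case
        set A := a.toReal with hA
        set B := b.toReal with hB
        have hApos : 0 < A := ENNReal.toReal_pos ha0 hatop
        have hBpos : 0 < B := ENNReal.toReal_pos hb0 hbtop
        have haA : a = ENNReal.ofReal A := (ENNReal.ofReal_toReal hatop).symm
        have hbB : b = ENNReal.ofReal B := (ENNReal.ofReal_toReal hbtop).symm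
        set T : ℝ := (A / B) ^ (β⁻¹) with hT
        have hTpos : 0 < T := Real.rpow_pos_of_pos (by positivity) _
        have key1 : T ^ α * B = A ^ (α / β) * B ^ (1 - α / β) := by
          have h1 : T ^ α = A ^ (α / β) / B ^ (α / β) := by
            rw [hT, ← Real.rpow_mul (by positivity),
              show β⁻¹ * α = α / β by rw [div_eq_mul_inv]; ring,
              Real.div_rpow hApos.le hBpos.le]
          have h2 : B ^ (1 - α / β) = B / B ^ (α / β) := by
            rw [Real.rpow_sub hBpos, Real.rpow_one]
          rw [h1, h2]
          ring
        have key2 : T ^ (α - β) * A = A ^ (α / β) * B ^ (1 - α / β) := by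
          have h1 : T ^ (α - β) = A ^ (α / β - 1) / B ^ (α / β - 1) := by
            rw [hT, ← Real.rpow_mul (by positivity),
              show β⁻¹ * (α - β) = α / β - 1 by field_simp,
              Real.div_rpow hApos.le hBpos.le]
          have h2 : B ^ (1 - α / β) = B / B ^ (α / β) := by
            rw [Real.rpow_sub hBpos, Real.rpow_one]
          rw [h1, Real.rpow_sub hApos, Real.rpow_sub hBpos, Real.rpow_one, h2]
          have hBne : B ^ (α / β) ≠ 0 := (Real.rpow_pos_of_pos hBpos _).ne'
          field_simp
          ring_nf
          simp
        have hba : ENNReal.ofReal (T ^ α) * b = ENNReal.ofReal (A ^ (α / β) * B ^ (1 - α / β)) := by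
          rw [hbB, ← ENNReal.ofReal_mul (Real.rpow_pos_of_pos hTpos α).le, key1]
        have haa : ENNReal.ofReal (T ^ (α - β)) * a =
            ENNReal.ofReal (A ^ (α / β) * B ^ (1 - α / β)) := by
          rw [haA, ← ENNReal.ofReal_mul (Real.rpow_pos_of_pos hTpos (α - β)).le, key2]
        calc rieszP d α f z
            ≤ ENNReal.ofReal C0 * (ENNReal.ofReal (T ^ α) * b +
                ENNReal.ofReal (T ^ (α - β)) * a) := hmaster f hf z T hTpos
          _ = ENNReal.ofReal C0 * (ENNReal.ofReal (A ^ (α / β) * B ^ (1 - α / β)) +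
                ENNReal.ofReal (A ^ (α / β) * B ^ (1 - α / β))) := by rw [hba, haa]
          _ = ENNReal.ofReal (2 * C0) * ENNReal.ofReal (A ^ (α / β) * B ^ (1 - α / β)) := by
              rw [ENNReal.ofReal_mul (by norm_num : (0:ℝ) ≤ 2),
                show (ENNReal.ofReal 2) = 2 from by norm_num]
              ring
          _ = ENNReal.ofReal (2 * C0) * a ^ (α / β) * b ^ (1 - α / β) := by
              rw [haA, hbB, ENNReal.ofReal_rpow_of_pos hApos, ENNReal.ofReal_rpow_of_pos hBpos,
                ENNReal.ofReal_mul (Real.rpow_pos_of_pos hApos (α / β)).le, mul_assoc]
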